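/- arXiv:1512.04905 — 4 statements merged into one kernel-verified Lean document; each statement's English description precedes it below -/
import Mathlib

section
/- Let F = x₀(Σ_{i=1}^n ε_i x_i²) ∈ ℝ[x₀,…,xₙ] with ε_i ∈ {−1,+1}. Then the real Waring rank of F satisfies 2n ≤ rk_ℝ(F) ≤ 2n+1, and if Σ_{i=1}^n ε_i = 0 then rk_ℝ(F) = 2n. -/
/-!
Upper bounds: `6 x₀ y² = (x₀ + y)³ + (x₀ - y)³ - 2 x₀³`, applied to each term `ε_i x₀ x_i²`,
writes `F` with `2n + 1` cubes; the `n` multiples of `x₀³` add up to `-(∑ ε_i / 3) x₀³`, which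
vanishes when `∑ ε_i = 0`.

Lower bound: put `x₀ = t`, `y = (x₁, …, xₙ)` and `F = ∑ c_k (α_k t + ℓ_k y)³`. Comparing
coefficients of `t` gives `Q y = 3 ∑ c_k α_k (ℓ_k y)²` for `Q = ∑ ε_i y_i²` and
`∑ c_k (ℓ_k y)³ = 0`. Polarising the latter at a point `u` where no nonzero `ℓ_k` vanishes gives
`∑ e_k (ℓ_k y)² = 0` with `e_k = c_k ℓ_k u`. So if the `ℓ_k` with `e_k > 0` vanish at `y`, so do
those with `e_k < 0`, hence every `ℓ_k` with `c_k ≠ 0`, and then `y` lies in the radical of the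
nondegenerate form `Q`. Thus the `ℓ_k` with `e_k > 0` have trivial common kernel, so there are at
least `n` of them, and likewise for `e_k < 0`.
-/

open MvPolynomial

/-- `L` is a real linear form (an `ℝ`-linear combination of the variables). -/
def IsLinearForm {n : ℕ} (L : MvPolynomial (Fin (n + 1)) ℝ) : Prop :=
  ∃ a : Fin (n + 1) → ℝ, L = ∑ i, C (a i) * X i

open Finset Module

section SumsOfCubes

variable {ι : Type*} [Fintype ι]

theorem sum_mul_add_pow_three (c p q : ι → ℝ) (t : ℝ) :
    ∑ k, c k * (p k * t + q k) ^ 3 =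
      (∑ k, c k * p k ^ 3) * t ^ 3 + (∑ k, 3 * c k * p k ^ 2 * q k) * t ^ 2 +
        (∑ k, 3 * c k * p k * q k ^ 2) * t + ∑ k, c k * q k ^ 3 := by
  simp only [sum_mul, ← sum_add_distrib]
  exact sum_congr rfl fun k _ => by ring

theorem sum_cubes_coeff_eq_of_forall_mul_eq {c p q : ι → ℝ} {e : ℝ}
    (h : ∀ t, t * e = ∑ k, c k * (p k * t + q k) ^ 3) :
    ∑ k, 3 * c k * p k * q k ^ 2 = e ∧ ∑ k, c k * q k ^ 3 = 0 := by
  simp only [sum_mul_add_pow_three] at h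
  have h₀ := h 0
  have h₁ := h 1
  have h₂ := h (-1)
  have h₃ := h 2
  norm_num at h₀ h₁ h₂ h₃
  constructor <;> linarith

theorem eq_zero_of_sum_mul_sq_eq_zero {e x : ι → ℝ} (h : ∑ k, e k * x k ^ 2 = 0)
    (hpos : ∀ k, 0 < e k → x k = 0) {k : ι} (hk : e k ≠ 0) : x k = 0 := by
  have hnonpos : ∀ j ∈ univ, e j * x j ^ 2 ≤ 0 := fun j _ => by
    rcases le_or_gt (e j) 0 with hj | hj
    · exact mul_nonpos_of_nonpos_of_nonneg hj (sq_nonneg _)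
    · simp [hpos j hj]
  have := (sum_eq_zero_iff_of_nonpos hnonpos).mp h k (mem_univ k)
  simpa [hk] using this

end SumsOfCubes

section DualSpace

variable {ι K V : Type*} [Field K] [AddCommGroup V] [Module K V]

theorem exists_forall_apply_ne_zero [Infinite K] [Finite ι] (ℓ : ι → Dual K V) :
    ∃ u, ∀ k, ℓ k ≠ 0 → ℓ k u ≠ 0 := by
  by_contra! h
  obtain ⟨⟨k, hk⟩, htop⟩ := Subspace.exists_eq_top_of_iUnion_eq_univ
    (p := fun k : {k // ℓ k ≠ 0} => LinearMap.ker (ℓ k)) <| Set.eq_univ_of_forall fun u => by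
      obtain ⟨k, hk, hku⟩ := h u
      exact Set.mem_iUnion.mpr ⟨⟨k, hk⟩, hku⟩
  exact hk (LinearMap.ker_eq_top.mp htop)

theorem finrank_le_card_of_forall_apply_eq_zero [FiniteDimensional K V] (ℓ : ι → Dual K V)
    (S : Finset ι) (h : ∀ y, (∀ k ∈ S, ℓ k y = 0) → y = 0) : finrank K V ≤ S.card := by
  have hinj : Function.Injective (LinearMap.pi fun k : S => ℓ k) := by
    rw [← LinearMap.ker_eq_bot, LinearMap.ker_eq_bot']
    exact fun y hy => h y fun k hk => congrFun hy ⟨k, hk⟩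
  simpa using LinearMap.finrank_le_finrank_of_injective hinj

end DualSpace

section LowerBound

variable {ι V : Type*} [Fintype ι] [AddCommGroup V] [Module ℝ V] [FiniteDimensional ℝ V]

theorem finrank_le_card_filter_pos_of_sum_mul_sq_eq_zero (e : ι → ℝ) (ℓ : ι → Dual ℝ V)
    (hsum : ∀ y, ∑ k, e k * ℓ k y ^ 2 = 0) (hker : ∀ y, (∀ k, e k ≠ 0 → ℓ k y = 0) → y = 0) :
    finrank ℝ V ≤ #{k | 0 < e k} :=
  finrank_le_card_of_forall_apply_eq_zero ℓ _ fun y hy =>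
    hker y fun _ => eq_zero_of_sum_mul_sq_eq_zero (hsum y) fun k hk => hy k (by simpa using hk)

theorem two_mul_finrank_le_card_of_sum_mul_sq_eq_zero (e : ι → ℝ) (ℓ : ι → Dual ℝ V)
    (hsum : ∀ y, ∑ k, e k * ℓ k y ^ 2 = 0) (hker : ∀ y, (∀ k, e k ≠ 0 → ℓ k y = 0) → y = 0) :
    2 * finrank ℝ V ≤ Fintype.card ι := by
  have hpos := finrank_le_card_filter_pos_of_sum_mul_sq_eq_zero e ℓ hsum hker
  have hneg := finrank_le_card_filter_pos_of_sum_mul_sq_eq_zero (-e) ℓ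
    (fun y => by simp [neg_mul, sum_neg_distrib, hsum y]) (by simpa using hker)
  simp only [Pi.neg_apply, neg_pos] at hneg
  have hsplit : #{k | 0 < e k} + #{k | e k < 0} ≤ Fintype.card ι := by
    calc #{k | 0 < e k} + #{k | e k < 0} ≤ #{k | 0 < e k} + #{k | ¬ 0 < e k} := by
          gcongr with k; exact fun h => h.not_gt
      _ = Fintype.card ι := card_filter_add_card_filter_not _
  omega

theorem separatingLeft_polarBilin_weightedSumSquares {κ : Type*} [Fintype κ]
    {w : κ → ℝ} (hw : ∀ i, w i ≠ 0) :
    (QuadraticMap.weightedSumSquares ℝ w).polarBilin.SeparatingLeft := by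
  classical
  intro y hy
  ext i
  have hyi := hy (Pi.single i 1)
  simp only [QuadraticMap.polarBilin_apply_apply, QuadraticMap.polar,
    QuadraticMap.weightedSumSquares_apply, smul_eq_mul, ← sum_sub_distrib] at hyi
  rw [sum_eq_single i (fun j _ hj => by simp [hj]) (by simp)] at hyi
  have : w i * (2 * y i) = 0 := by
    simp only [Pi.add_apply, Pi.single_eq_same, mul_one] at hyi
    linarith
  simpa [hw i] using this

theorem two_mul_finrank_le_card_of_forall_mul_eq_sum_cubes {Q : QuadraticForm ℝ V}
    (hQ : Q.polarBilin.SeparatingLeft) (c α : ι → ℝ) (ℓ : ι → Dual ℝ V)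
    (h : ∀ t y, t * Q y = ∑ k, c k * (α k * t + ℓ k y) ^ 3) :
    2 * finrank ℝ V ≤ Fintype.card ι := by
  have hQ_eq (y : V) : ∑ k, 3 * c k * α k * ℓ k y ^ 2 = Q y :=
    (sum_cubes_coeff_eq_of_forall_mul_eq (h · y)).1
  have hcubes (y : V) : ∑ k, c k * ℓ k y ^ 3 = 0 :=
    (sum_cubes_coeff_eq_of_forall_mul_eq (h · y)).2
  -- the coefficient of `t` in `∑ k, c k * ℓ k (t • u + y) ^ 3 = 0`
  have hpolar (u y : V) : ∑ k, 3 * c k * ℓ k u * ℓ k y ^ 2 = 0 :=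
    (sum_cubes_coeff_eq_of_forall_mul_eq fun t => by
      simpa [add_comm, mul_comm] using (hcubes (t • u + y)).symm).1
  obtain ⟨u, hu⟩ := exists_forall_apply_ne_zero ℓ
  refine two_mul_finrank_le_card_of_sum_mul_sq_eq_zero (fun k => 3 * c k * ℓ k u) ℓ
    (fun y => by simpa [mul_assoc] using hpolar u y) fun y hy => hQ y fun z => ?_
  have hvanish (k : ι) : c k = 0 ∨ ℓ k y = 0 := by
    by_cases hc : c k = 0
    · exact .inl hc
    by_cases hℓ : ℓ k = 0
    · simp [hℓ]
    exact .inr (hy k (by simp [hc, hu k hℓ]))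
  rw [QuadraticMap.polarBilin_apply_apply, QuadraticMap.polar, ← hQ_eq, ← hQ_eq, ← hQ_eq,
    ← sum_sub_distrib, ← sum_sub_distrib]
  refine sum_eq_zero fun k _ => ?_
  rcases hvanish k with h | h <;> simp [h]

end LowerBound

section Polynomials

variable {n : ℕ}

theorem isLinearForm_X (j : Fin (n + 1)) : IsLinearForm (X j) :=
  ⟨Pi.single j 1, by simp [Pi.single_apply]⟩

theorem IsLinearForm.add {L L' : MvPolynomial (Fin (n + 1)) ℝ} (hL : IsLinearForm L)
    (hL' : IsLinearForm L') : IsLinearForm (L + L') := by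
  obtain ⟨a, rfl⟩ := hL
  obtain ⟨b, rfl⟩ := hL'
  exact ⟨a + b, by simp [add_mul, sum_add_distrib]⟩

theorem IsLinearForm.sub {L L' : MvPolynomial (Fin (n + 1)) ℝ} (hL : IsLinearForm L)
    (hL' : IsLinearForm L') : IsLinearForm (L - L') := by
  obtain ⟨a, rfl⟩ := hL
  obtain ⟨b, rfl⟩ := hL'
  exact ⟨a - b, by simp [sub_mul, sum_sub_distrib]⟩

theorem IsLinearForm.exists_eval_cons {L : MvPolynomial (Fin (n + 1)) ℝ} (hL : IsLinearForm L) :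
    ∃ (α : ℝ) (ℓ : Dual ℝ (Fin n → ℝ)), ∀ t y, eval (Fin.cons t y) L = α * t + ℓ y := by
  obtain ⟨a, rfl⟩ := hL
  refine ⟨a 0, Fintype.linearCombination ℝ (a ∘ Fin.succ), fun t y => ?_⟩
  simp [Fin.sum_univ_succ, Fintype.linearCombination_apply, mul_comm]

def IsSumOfCubes (ι : Type*) [Fintype ι] (F : MvPolynomial (Fin (n + 1)) ℝ) : Prop :=
  ∃ (c : ι → ℝ) (L : ι → MvPolynomial (Fin (n + 1)) ℝ),
    (∀ k, IsLinearForm (L k)) ∧ F = ∑ k, C (c k) * L k ^ 3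

theorem IsSumOfCubes.of_card_eq {ι : Type*} [Fintype ι] {F : MvPolynomial (Fin (n + 1)) ℝ}
    {m : ℕ} (hF : IsSumOfCubes ι F) (hm : Fintype.card ι = m) : IsSumOfCubes (Fin m) F := by
  obtain ⟨c, L, hL, rfl⟩ := hF
  let e := Fintype.equivFinOfCardEq hm
  exact ⟨c ∘ e.symm, L ∘ e.symm, fun k => hL _, (e.symm.sum_comp _).symm⟩

theorem IsSumOfCubes.add_C_mul_pow_three {ι : Type*} [Fintype ι]
    {F L : MvPolynomial (Fin (n + 1)) ℝ} (hF : IsSumOfCubes ι F) (hL : IsLinearForm L) (a : ℝ) :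
    IsSumOfCubes (Option ι) (F + C a * L ^ 3) := by
  obtain ⟨c, L', hL', rfl⟩ := hF
  refine ⟨fun k => k.elim a c, fun k => k.elim L L', fun k => ?_, ?_⟩
  · cases k <;> simp [hL, hL']
  · simp [Fintype.sum_option, add_comm]

theorem C_mul_mul_sq_eq {σ : Type*} (a : ℝ) (x y : MvPolynomial σ ℝ) :
    C a * (x * y ^ 2) = C (a / 6) * (x + y) ^ 3 + C (a / 6) * (x - y) ^ 3 - C (a / 3) * x ^ 3 := by
  rw [show a / 3 = 2 * (a / 6) by ring, map_mul]
  nth_rw 1 [show a = 6 * (a / 6) by ring]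
  rw [map_mul, map_ofNat, map_ofNat]
  ring

theorem isSumOfCubes_sum_X_zero_add_sub_pow_three (w : Fin n → ℝ) :
    IsSumOfCubes (Fin n ⊕ Fin n) (∑ i, (C (w i / 6) * (X 0 + X i.succ) ^ 3 +
      C (w i / 6) * (X 0 - X i.succ) ^ 3)) :=
  ⟨Sum.elim (fun i => w i / 6) (fun i => w i / 6),
    Sum.elim (fun i => X 0 + X i.succ) (fun i => X 0 - X i.succ),
    Sum.rec (fun i => (isLinearForm_X 0).add (isLinearForm_X _))
      (fun i => (isLinearForm_X 0).sub (isLinearForm_X _)),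
    by simp [Fintype.sum_sum_type, sum_add_distrib]⟩

theorem X_zero_mul_sum_eq (ε : Fin (n + 1) → ℝ) :
    X 0 * ∑ i : Fin (n + 1), (if i = 0 then 0 else C (ε i) * X i ^ 2) =
      ∑ i : Fin n, (C (ε i.succ / 6) * (X 0 + X i.succ) ^ 3 +
        C (ε i.succ / 6) * (X 0 - X i.succ) ^ 3) +
        C (-(∑ i ∈ univ.erase 0, ε i) / 3) * X 0 ^ 3 := by
  have hS : ∑ i ∈ univ.erase 0, ε i = ∑ i : Fin n, ε i.succ := by
    have := add_sum_erase univ ε (mem_univ 0)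
    rw [Fin.sum_univ_succ] at this
    linarith
  rw [hS, Fin.sum_univ_succ, if_pos rfl, zero_add, mul_sum]
  have hterm (i : Fin n) : X 0 * (if i.succ = 0 then 0 else C (ε i.succ) * X i.succ ^ 2) =
      C (ε i.succ / 6) * (X 0 + X i.succ) ^ 3 + C (ε i.succ / 6) * (X 0 - X i.succ) ^ 3 -
        C (ε i.succ / 3) * X 0 ^ 3 := by
    rw [if_neg i.succ_ne_zero, mul_left_comm, C_mul_mul_sq_eq]
  rw [sum_congr rfl fun i _ => hterm i, sum_sub_distrib, ← sum_mul, ← map_sum, ← sum_div,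
    neg_div, map_neg, neg_mul, sub_eq_add_neg]

theorem eval_cons_X_zero_mul_sum (ε : Fin (n + 1) → ℝ) (t : ℝ) (y : Fin n → ℝ) :
    eval (Fin.cons t y) (X 0 * ∑ i : Fin (n + 1), (if i = 0 then 0 else C (ε i) * X i ^ 2)) =
      t * QuadraticMap.weightedSumSquares ℝ (fun i : Fin n => ε i.succ) y := by
  simp [Fin.sum_univ_succ, sq]

theorem two_mul_le_card_of_isSumOfCubes {ι : Type*} [Fintype ι] {ε : Fin (n + 1) → ℝ}
    (hε : ∀ i, i ≠ 0 → ε i ≠ 0)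
    (hF : IsSumOfCubes ι (X 0 * ∑ i : Fin (n + 1), (if i = 0 then 0 else C (ε i) * X i ^ 2))) :
    2 * n ≤ Fintype.card ι := by
  obtain ⟨c, L, hL, hF⟩ := hF
  choose α ℓ hαℓ using fun k => (hL k).exists_eval_cons
  simpa using two_mul_finrank_le_card_of_forall_mul_eq_sum_cubes
    (separatingLeft_polarBilin_weightedSumSquares fun i => hε _ i.succ_ne_zero) c α ℓ
    fun t y => by rw [← eval_cons_X_zero_mul_sum, hF]; simp [hαℓ]

end Polynomials

theorem stmt_15_general (n : ℕ) (ε : Fin (n + 1) → ℝ)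
    (hε : ∀ i, i ≠ 0 → ε i = 1 ∨ ε i = -1)
    (F : MvPolynomial (Fin (n + 1)) ℝ)
    (hF : F = X 0 * ∑ i : Fin (n + 1), if i = 0 then 0 else C (ε i) * X i ^ 2) :
    (∃ (c : Fin (2 * n + 1) → ℝ) (L : Fin (2 * n + 1) → MvPolynomial (Fin (n + 1)) ℝ),
      (∀ k, IsLinearForm (L k)) ∧ F = ∑ k, C (c k) * L k ^ 3) ∧
    (∀ (s : ℕ) (c : Fin s → ℝ) (L : Fin s → MvPolynomial (Fin (n + 1)) ℝ),
      (∀ k, IsLinearForm (L k)) → F = ∑ k, C (c k) * L k ^ 3 → 2 * n ≤ s) ∧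
    ((∑ i ∈ Finset.univ.erase 0, ε i) = 0 →
      ∃ (c : Fin (2 * n) → ℝ) (L : Fin (2 * n) → MvPolynomial (Fin (n + 1)) ℝ),
        (∀ k, IsLinearForm (L k)) ∧ F = ∑ k, C (c k) * L k ^ 3) := by
  have hpairs := isSumOfCubes_sum_X_zero_add_sub_pow_three fun i : Fin n => ε i.succ
  refine ⟨?_, fun s c L hL hFL => ?_, fun hS => ?_⟩
  · rw [hF, X_zero_mul_sum_eq]
    exact (hpairs.add_C_mul_pow_three (isLinearForm_X 0) _).of_card_eq (by simp; ring)
  · simpa using two_mul_le_card_of_isSumOfCubes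
      (fun i hi => by rcases hε i hi with h | h <;> simp [h]) ⟨c, L, hL, hF ▸ hFL⟩
  · rw [hF, X_zero_mul_sum_eq, hS, neg_zero, zero_div, map_zero, zero_mul, add_zero]
    exact hpairs.of_card_eq (by simp; ring)

theorem stmt_15 (n : ℕ) (hn : 2 ≤ n) (ε : Fin (n + 1) → ℝ)
    (hε : ∀ i, i ≠ 0 → ε i = 1 ∨ ε i = -1)
    (F : MvPolynomial (Fin (n + 1)) ℝ)
    (hF : F = X 0 * ∑ i : Fin (n + 1), if i = 0 then 0 else C (ε i) * X i ^ 2) :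
    (∃ (c : Fin (2 * n + 1) → ℝ) (L : Fin (2 * n + 1) → MvPolynomial (Fin (n + 1)) ℝ),
      (∀ k, IsLinearForm (L k)) ∧ F = ∑ k, C (c k) * L k ^ 3) ∧
    (∀ (s : ℕ) (c : Fin s → ℝ) (L : Fin s → MvPolynomial (Fin (n + 1)) ℝ),
      (∀ k, IsLinearForm (L k)) → F = ∑ k, C (c k) * L k ^ 3 → 2 * n ≤ s) ∧
    ((∑ i ∈ Finset.univ.erase 0, ε i) = 0 →
      ∃ (c : Fin (2 * n) → ℝ) (L : Fin (2 * n) → MvPolynomial (Fin (n + 1)) ℝ),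
        (∀ k, IsLinearForm (L k)) ∧ F = ∑ k, C (c k) * L k ^ 3) :=
  stmt_15_general n ε hε F hF
end

section
/- The real Waring rank of the cubic form x₀(x₀² + x₁² + … + xₙ²) ∈ ℝ[x₀,…,xₙ] is exactly 2n, i.e., it can be written as a sum of 2n terms ±L³ with real linear forms L, and no fewer. -/
/-!
Write `v₀ ‖v‖² = ∑ₖ cₖ ⟨aₖ, v⟩³`. Second differences in a direction `z` with `z₀ = 0` give
`v₀ ‖z‖² = 3 ∑ₖ cₖ ⟨aₖ, v⟩ ⟨aₖ, z⟩²`, so for `v₀ ≠ 0` the `aₖ` not vanishing at `v` separate the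
points of the hyperplane `z₀ = 0`: there are at least `n` of them. Choose `v` with `v₀ ≠ 0` at which
as many `aₖ` as possible vanish. If fewer than `n` vanished, some `z ≠ 0` with `z₀ = 0` would be
killed by all of them but not by some other `aₖ`, and moving `v` along `z` would kill that `aₖ`
too. Hence at least `2n` terms. Conversely
`(α x₀ + β xᵢ)³ + (α x₀ - β xᵢ)³ = 2α³ x₀³ + 6αβ² x₀ xᵢ²`, and `2nα³ = 6αβ² = 1` gives `2n` cubes.
-/

open MvPolynomial

open Finset

theorem exists_ne_zero_apply_zero_eq_zero_forall_dotProduct_eq_zero {K ι : Type*} [Field K]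
    {n : ℕ} (a : ι → Fin (n + 1) → K) (S : Finset ι) (hS : #S < n) :
    ∃ z : Fin (n + 1) → K, z ≠ 0 ∧ z 0 = 0 ∧ ∀ k ∈ S, a k ⬝ᵥ z = 0 := by
  let Φ : (Fin (n + 1) → K) →ₗ[K] (S → K) × K :=
    (LinearMap.pi fun k : S => dotProductBilin K K (a k)).prod (LinearMap.proj 0)
  have hΦ : ¬ Function.Injective Φ := fun hinj => by
    have := LinearMap.finrank_le_finrank_of_injective hinj
    simp only [Module.finrank_prod, Module.finrank_fintype_fun_eq_card, Module.finrank_self,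
      Fintype.card_fin, Fintype.card_coe] at this
    omega
  obtain ⟨z, hz, hz0⟩ := (Submodule.ne_bot_iff _).mp (mt LinearMap.ker_eq_bot.mp hΦ)
  simp only [LinearMap.mem_ker, Prod.ext_iff, funext_iff] at hz
  exact ⟨z, hz0, hz.2, fun k hk => hz.1 ⟨k, hk⟩⟩

def IsWaringDecomposition {n : ℕ} {ι : Type*} [Fintype ι] (c : ι → ℝ)
    (a : ι → Fin (n + 1) → ℝ) : Prop :=
  ∀ v, v 0 * v ⬝ᵥ v = ∑ k, c k * (a k ⬝ᵥ v) ^ 3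

namespace IsWaringDecomposition

variable {n : ℕ} {ι : Type*} [Fintype ι] {c : ι → ℝ} {a : ι → Fin (n + 1) → ℝ}

theorem mul_dotProduct_self_eq (hF : IsWaringDecomposition c a)
    (v z : Fin (n + 1) → ℝ) (hz : z 0 = 0) :
    v 0 * z ⬝ᵥ z = 3 * ∑ k, c k * a k ⬝ᵥ v * (a k ⬝ᵥ z) ^ 2 := by
  have hterm (k : ι) : c k * (a k ⬝ᵥ (v + z)) ^ 3 + c k * (a k ⬝ᵥ (v - z)) ^ 3
      - 2 * (c k * (a k ⬝ᵥ v) ^ 3) = 6 * (c k * a k ⬝ᵥ v * (a k ⬝ᵥ z) ^ 2) := by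
    rw [dotProduct_add, dotProduct_sub]; ring
  have hsum := congr($(hF (v + z)) + $(hF (v - z)) - 2 * $(hF v))
  rw [mul_sum, ← sum_add_distrib, ← sum_sub_distrib, sum_congr rfl fun k _ => hterm k,
    ← mul_sum] at hsum
  simp only [Pi.add_apply, Pi.sub_apply, hz, add_zero, sub_zero, dotProduct_add, dotProduct_sub,
    add_dotProduct, sub_dotProduct, dotProduct_comm z v] at hsum
  linear_combination (1 / 2 : ℝ) * hsum

theorem eq_zero_of_dotProduct_eq_zero (hF : IsWaringDecomposition c a)
    {v z : Fin (n + 1) → ℝ} (hv : v 0 ≠ 0) (hz : z 0 = 0)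
    (h : ∀ k, a k ⬝ᵥ v ≠ 0 → a k ⬝ᵥ z = 0) : z = 0 := by
  have hzz := hF.mul_dotProduct_self_eq v z hz
  rw [sum_eq_zero fun k _ => ?_, mul_zero, mul_eq_zero, or_iff_right hv] at hzz
  · exact dotProduct_self_eq_zero.mp hzz
  by_cases hk : a k ⬝ᵥ v = 0
  · simp [hk]
  · simp [h k hk]

theorem le_card_dotProduct_ne_zero (hF : IsWaringDecomposition c a)
    {v : Fin (n + 1) → ℝ} (hv : v 0 ≠ 0) : n ≤ #{k | a k ⬝ᵥ v ≠ 0} := by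
  by_contra! hlt
  obtain ⟨z, hz, hz0, hzS⟩ :=
    exists_ne_zero_apply_zero_eq_zero_forall_dotProduct_eq_zero a _ hlt
  exact hz (hF.eq_zero_of_dotProduct_eq_zero hv hz0 fun k hk => hzS k (by simpa))

theorem exists_card_dotProduct_ne_zero_lt (hF : IsWaringDecomposition c a)
    {v : Fin (n + 1) → ℝ} (hv : v 0 ≠ 0) (hS : #{k | a k ⬝ᵥ v = 0} < n) :
    ∃ w : Fin (n + 1) → ℝ, w 0 ≠ 0 ∧ #{k | a k ⬝ᵥ w ≠ 0} < #{k | a k ⬝ᵥ v ≠ 0} := by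
  obtain ⟨z, hz, hz0, hzS⟩ :=
    exists_ne_zero_apply_zero_eq_zero_forall_dotProduct_eq_zero a _ hS
  obtain ⟨k, hkv, hkz⟩ : ∃ k, a k ⬝ᵥ v ≠ 0 ∧ a k ⬝ᵥ z ≠ 0 := by
    by_contra! h
    exact hz (hF.eq_zero_of_dotProduct_eq_zero hv hz0 h)
  set w := v - (a k ⬝ᵥ v / a k ⬝ᵥ z) • z
  have hw (j : ι) : a j ⬝ᵥ w = a j ⬝ᵥ v - a k ⬝ᵥ v / a k ⬝ᵥ z * a j ⬝ᵥ z := by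
    simp [w, dotProduct_sub, dotProduct_smul]
  refine ⟨w, by simpa [w, hz0] using hv, card_lt_card ((ssubset_iff_of_subset ?_).mpr
    ⟨k, by simpa using hkv, by simp [hw, hkz]⟩)⟩
  intro j
  simp only [mem_filter, mem_univ, true_and]
  contrapose!
  intro hj
  rw [hw, hj, hzS j (by simpa using hj), mul_zero, sub_zero]

theorem two_mul_le_card (hF : IsWaringDecomposition c a) : 2 * n ≤ Fintype.card ι := by
  let f (v : Fin (n + 1) → ℝ) : ℕ := #{k | a k ⬝ᵥ v ≠ 0}
  have hs : {v : Fin (n + 1) → ℝ | v 0 ≠ 0}.Nonempty := ⟨Pi.single 0 1, by simp⟩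
  set v := Function.argminOn f _ hs
  have hv : v 0 ≠ 0 := Function.argminOn_mem f _ hs
  have hne := hF.le_card_dotProduct_ne_zero hv
  have heq : n ≤ #{k | a k ⬝ᵥ v = 0} := by
    by_contra! hlt
    obtain ⟨w, hw, hlt'⟩ := hF.exists_card_dotProduct_ne_zero_lt hv hlt
    exact Function.not_lt_argminOn f _ hw hlt'
  calc 2 * n ≤ #{k | a k ⬝ᵥ v = 0} + #{k | a k ⬝ᵥ v ≠ 0} := by omega
    _ = Fintype.card ι := card_filter_add_card_filter_not _

end IsWaringDecomposition

section Upper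
variable {n : ℕ}

theorem isLinearForm_C_mul_X_add_C_mul_X (x y : ℝ) (i j : Fin (n + 1)) :
    IsLinearForm (C x * X i + C y * X j) :=
  ⟨Pi.single i x + Pi.single j y, by
    simp [Pi.single_apply, apply_ite C, add_mul, sum_add_distrib]⟩

theorem sum_cube_add_cube_eq_X_zero_mul_sum_sq {α β : ℝ} (hα : 2 * n * α ^ 3 = 1)
    (hβ : 6 * α * β ^ 2 = 1) :
    ∑ i : Fin n, ((C α * X 0 + C β * X i.succ) ^ 3 + (C α * X 0 + C (-β) * X i.succ) ^ 3)
      = (X 0 * ∑ i, X i ^ 2 : MvPolynomial (Fin (n + 1)) ℝ) := by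
  have hα' : 2 * (n : MvPolynomial (Fin (n + 1)) ℝ) * C α ^ 3 = 1 := by
    simpa [map_ofNat] using congrArg C hα
  have hβ' : 6 * C α * C β ^ 2 = (1 : MvPolynomial (Fin (n + 1)) ℝ) := by
    simpa [map_ofNat] using congrArg C hβ
  have hterm (i : Fin n) : (C α * X 0 + C β * X i.succ) ^ 3 + (C α * X 0 + C (-β) * X i.succ) ^ 3
      = 2 * C α ^ 3 * X 0 ^ 3 + X 0 * X i.succ ^ 2 := by
    rw [map_neg]
    linear_combination (X 0 * X i.succ ^ 2) * hβ'
  rw [sum_congr rfl fun i _ => hterm i, sum_add_distrib, sum_const, card_univ, Fintype.card_fin,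
    nsmul_eq_mul, Fin.sum_univ_succ, mul_add, mul_sum]
  linear_combination X 0 ^ 3 * hα'

theorem exists_sum_cube_add_cube_eq_X_zero_mul_sum_sq (hn : n ≠ 0) : ∃ α β : ℝ,
    ∑ i : Fin n, ((C α * X 0 + C β * X i.succ) ^ 3 + (C α * X 0 + C (-β) * X i.succ) ^ 3)
      = (X 0 * ∑ i, X i ^ 2 : MvPolynomial (Fin (n + 1)) ℝ) := by
  set α : ℝ := (2 * n : ℝ)⁻¹ ^ ((3 : ℕ) : ℝ)⁻¹
  have hα : 0 < α := by positivity
  refine ⟨α, √(6 * α)⁻¹, sum_cube_add_cube_eq_X_zero_mul_sum_sq ?_ ?_⟩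
  · rw [Real.rpow_inv_natCast_pow (by positivity) three_ne_zero]
    field_simp
  · rw [Real.sq_sqrt (by positivity)]
    field_simp

end Upper

theorem stmt_16 (n : ℕ) (hn : 1 ≤ n)
    (F : MvPolynomial (Fin (n + 1)) ℝ)
    (hF : F = X 0 * ∑ i, X i ^ 2) :
    (∃ (c : Fin (2 * n) → ℝ) (L : Fin (2 * n) → MvPolynomial (Fin (n + 1)) ℝ),
      (∀ k, c k = 1 ∨ c k = -1) ∧ (∀ k, IsLinearForm (L k)) ∧
      F = ∑ k, C (c k) * L k ^ 3) ∧
    (∀ (s : ℕ) (c : Fin s → ℝ) (L : Fin s → MvPolynomial (Fin (n + 1)) ℝ),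
      (∀ k, c k = 1 ∨ c k = -1) → (∀ k, IsLinearForm (L k)) →
      F = ∑ k, C (c k) * L k ^ 3 → 2 * n ≤ s) := by
  subst hF
  refine ⟨?_, fun s c L _ hL hF => ?_⟩
  · obtain ⟨α, β, hsum⟩ := exists_sum_cube_add_cube_eq_X_zero_mul_sum_sq (by omega : n ≠ 0)
    let L (p : Fin 2 × Fin n) := C α * X 0 + C (![β, -β] p.1) * X p.2.succ
    refine ⟨fun _ => 1, fun k => L (finProdFinEquiv.symm k), fun _ => Or.inl rfl,
      fun _ => isLinearForm_C_mul_X_add_C_mul_X _ _ _ _, ?_⟩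
    rw [← hsum]
    simp only [map_one, one_mul, Equiv.sum_comp finProdFinEquiv.symm fun p => L p ^ 3,
      Fintype.sum_prod_type_right, Fin.sum_univ_two]
    rfl
  · choose a ha using hL
    have hW : IsWaringDecomposition c a := fun v => by
      simpa [ha, dotProduct, sq] using congrArg (eval v) hF
    simpa using hW.two_mul_le_card
end

section
/- Let F = x₀(x₀² − x₁² − … − xₙ²) ∈ ℝ[x₀,…,xₙ] with n ≥ 1. For all real λ₁,…,λₙ, the quadratic form ∂F/∂x₀ + Σ_{i=1}^n λ_i ∂F/∂x_i has full rank n+1; consequently (via the lower-bound criterion) rk_ℝ(F) ≥ 2n+1, and combined with the upper bound rk_ℝ(F) = 2n+1. -/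
/-!
If `F = ∑ₖ cₖ ⟨aₖ, x⟩³`, then the derivative of `F` in direction `w` is the quadratic form
`∑ₖ 3 cₖ ⟨w, aₖ⟩ ⟨aₖ, x⟩²`, whose Gram matrix has rank at most the number of `k` with
`⟨w, aₖ⟩ ≠ 0`. For `F = x₀ (x₀² - ∑ xᵢ²)` and `w = (1, λ)`, completing the square gives
`∂_w F = (3 + ∑ λᵢ²) x₀² - ∑ (xᵢ + λᵢ x₀)²`, a sum of `n + 1` nonzero multiples of squares of
independent linear forms, so the rank is always `n + 1`. Taking `λ = 0` shows that the `aₖ` span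
`ℝⁿ⁺¹`; pick a basis among them and a functional `w` with `w₀ = 1` vanishing on `n` of its
vectors. Those `n` indices have `⟨w, aₖ⟩ = 0`, while at least `n + 1` others do not, so
`s ≥ 2n + 1`. Conversely `(x₀ + xᵢ)³ + (x₀ - xᵢ)³ = 2x₀³ + 6x₀xᵢ²` writes `F` with `2n + 1` cubes.
-/

open MvPolynomial

/-- The symmetric Gram matrix associated to a quadratic form `Q` in `n + 1` variables. -/
noncomputable def gramMatrix (n : ℕ) (Q : MvPolynomial (Fin (n + 1)) ℝ) :
    Matrix (Fin (n + 1)) (Fin (n + 1)) ℝ :=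
  Matrix.of fun i j =>
    if i = j then coeff (Finsupp.single i 2) Q
    else coeff (Finsupp.single i 1 + Finsupp.single j 1) Q / 2

open Finset Matrix

namespace Matrix

variable {ι m K : Type*} [Fintype ι] [DecidableEq ι] [Field K]

theorem sum_smul_vecMulVec_self (μ : ι → K) (a : ι → m → K) :
    ∑ k, μ k • vecMulVec (a k) (a k) = (of a)ᵀ * diagonal μ * of a := by
  ext i j
  simp [sum_apply, vecMulVec_apply, mul_apply, diagonal_apply, mul_comm, mul_left_comm]

variable [Fintype m]

theorem rank_sum_smul_vecMulVec_self_le_finrank_span (μ : ι → K) (a : ι → m → K) :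
    (∑ k, μ k • vecMulVec (a k) (a k)).rank ≤
      Module.finrank K (Submodule.span K (Set.range a)) := by
  rw [sum_smul_vecMulVec_self]
  exact (rank_mul_le_right _ _).trans_eq (rank_eq_finrank_span_row (of a))

variable [DecidableEq K]

theorem rank_sum_smul_vecMulVec_self_le_card (μ : ι → K) (a : ι → m → K) :
    (∑ k, μ k • vecMulVec (a k) (a k)).rank ≤ #{k | μ k ≠ 0} := by
  calc (∑ k, μ k • vecMulVec (a k) (a k)).rank
      ≤ (diagonal μ).rank := by
        rw [sum_smul_vecMulVec_self]
        exact (rank_mul_le_left _ _).trans (rank_mul_le_right _ _)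
    _ = #{k | μ k ≠ 0} := by rw [rank_diagonal, Fintype.card_subtype]

theorem rank_sum_smul_vecMulVec_self_of_linearIndependent [DecidableEq m] {μ : m → K}
    (hμ : ∀ k, μ k ≠ 0) {a : m → m → K} (ha : LinearIndependent K a) :
    (∑ k, μ k • vecMulVec (a k) (a k)).rank = Fintype.card m := by
  have hA : IsUnit (of a).det :=
    (isUnit_iff_isUnit_det _).1 (linearIndependent_rows_iff_isUnit.1 ha)
  rw [sum_smul_vecMulVec_self, rank_mul_eq_left_of_isUnit_det _ _ hA,
    rank_mul_eq_right_of_isUnit_det _ _ (by rwa [det_transpose]), rank_diagonal]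
  simp [hμ]

end Matrix

open Module in
theorem exists_dual_eq_one_vanishing_of_span_eq_top {K V ι : Type*} [Field K] [DecidableEq K]
    [AddCommGroup V] [Module K V] [FiniteDimensional K V] [Fintype ι] {a : ι → V}
    (ha : Submodule.span K (Set.range a) = ⊤) {e : V} (he : e ≠ 0) :
    ∃ φ : Dual K V, φ e = 1 ∧ finrank K V ≤ #{k | φ (a k) = 0} + 1 := by
  classical
  obtain ⟨κ, f, hf, hspan, hli⟩ := exists_linearIndependent' K a
  have : Fintype κ := Fintype.ofInjective f hf
  let B : Basis κ K V := Basis.mk hli (by rw [hspan, ha])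
  obtain ⟨j, hj⟩ : ∃ j, B.coord j e ≠ 0 := by
    by_contra! h
    exact he (B.ext_elem fun j => by simpa using h j)
  set φ : Dual K V := (B.coord j e)⁻¹ • B.coord j
  refine ⟨φ, inv_mul_cancel₀ hj, ?_⟩
  have hsub : (univ.erase j).map ⟨f, hf⟩ ⊆ ({k | φ (a k) = 0} : Finset ι) := by
    intro k hk
    obtain ⟨i, hi, rfl⟩ := mem_map.1 hk
    have hfi : a (f i) = B i := (Basis.mk_apply hli _ i).symm
    simp [φ, hfi, ne_of_mem_erase hi]
  calc finrank K V = Fintype.card κ := finrank_eq_card_basis B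
    _ = ((univ.erase j).map ⟨f, hf⟩).card + 1 := by
      have := Fintype.card_pos_iff.2 ⟨j⟩
      simp only [card_map, card_erase_of_mem (mem_univ j), card_univ]
      omega
    _ ≤ _ := by gcongr

theorem dual_apply_eq_dotProduct {m R : Type*} [Fintype m] [DecidableEq m] [CommSemiring R]
    (φ : Module.Dual R (m → R)) (v : m → R) :
    φ v = (fun i => φ (Pi.single i 1)) ⬝ᵥ v := by
  conv_lhs => rw [pi_eq_sum_univ' v]
  simp [dotProduct, mul_comm]

section DirectionalDerivative

variable {σ R : Type*} [Fintype σ] [CommSemiring R]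

noncomputable def linearForm : (σ → R) →ₗ[R] MvPolynomial σ R := Fintype.linearCombination R X

theorem linearForm_apply (a : σ → R) : linearForm a = ∑ i, a i • X i := rfl

theorem linearForm_single [DecidableEq σ] (i : σ) :
    linearForm (Pi.single i 1) = (X i : MvPolynomial σ R) := by
  simp [linearForm]

noncomputable def dirDeriv (w : σ → R) : Derivation R (MvPolynomial σ R) (MvPolynomial σ R) :=
  ∑ i, w i • pderiv i

theorem dirDeriv_apply (w : σ → R) (P : MvPolynomial σ R) :
    dirDeriv w P = ∑ i, C (w i) * pderiv i P := by
  rw [dirDeriv, ← Derivation.coeFnAddMonoidHom_apply, map_sum, Finset.sum_apply]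
  simp [smul_eq_C_mul]

theorem dirDeriv_X (w : σ → R) (i : σ) : dirDeriv w (X i) = C (w i) := by
  classical
  simp [dirDeriv_apply, pderiv_X, Pi.single_apply]

theorem dirDeriv_linearForm (w a : σ → R) : dirDeriv w (linearForm a) = C (w ⬝ᵥ a) := by
  simp [linearForm_apply, dirDeriv_X, dotProduct, smul_eq_C_mul, mul_comm]

theorem dirDeriv_linearForm_pow_three (w a : σ → R) :
    dirDeriv w (linearForm a ^ 3) = (3 * (w ⬝ᵥ a)) • linearForm a ^ 2 := by
  rw [Derivation.leibniz_pow, dirDeriv_linearForm, smul_eq_C_mul]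
  simp only [smul_eq_mul, nsmul_eq_mul, map_mul, map_ofNat, Nat.cast_ofNat]
  ring

end DirectionalDerivative

theorem isLinearForm_iff_mem_range {n : ℕ} {L : MvPolynomial (Fin (n + 1)) ℝ} :
    IsLinearForm L ↔ L ∈ LinearMap.range linearForm := by
  simp [IsLinearForm, linearForm_apply, smul_eq_C_mul, eq_comm]

theorem pderiv_zero_add_sum_eq_dirDeriv {n : ℕ} (lam : Fin n → ℝ)
    (P : MvPolynomial (Fin (n + 1)) ℝ) :
    pderiv 0 P + ∑ k, C (lam k) * pderiv k.succ P = dirDeriv (Fin.cons 1 lam) P := by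
  simp [dirDeriv_apply, Fin.sum_univ_succ]

noncomputable def gramMatrixₗ (n : ℕ) :
    MvPolynomial (Fin (n + 1)) ℝ →ₗ[ℝ] Matrix (Fin (n + 1)) (Fin (n + 1)) ℝ where
  toFun := gramMatrix n
  map_add' P Q := by
    ext i j
    simp only [gramMatrix, of_apply, coeff_add, Matrix.add_apply]
    split_ifs <;> ring
  map_smul' r P := by
    ext i j
    simp only [gramMatrix, of_apply, coeff_smul, Matrix.smul_apply, smul_eq_mul,
      RingHom.id_apply]
    split_ifs <;> ring

section GramMatrix

variable {n : ℕ}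

@[simp]
theorem gramMatrixₗ_apply (P : MvPolynomial (Fin (n + 1)) ℝ) :
    gramMatrixₗ n P = gramMatrix n P := rfl

theorem gramMatrix_X_mul_X (p q : Fin (n + 1)) :
    gramMatrix n (X p * X q) = of fun i j =>
      ((if p = i ∧ q = j then 1 else 0) + (if p = j ∧ q = i then 1 else 0)) / 2 := by
  have hcoeff (i j : Fin (n + 1)) :
      coeff (Finsupp.single i 1 + Finsupp.single j 1) (X p * X q : MvPolynomial _ ℝ) =
        if (p = i ∧ q = j) ∨ (p = j ∧ q = i) then 1 else 0 := by
    rw [X, X, monomial_mul, one_mul, coeff_monomial]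
    simp [Finsupp.single_add_single_eq_single_add_single]
  ext i j
  rw [gramMatrix, of_apply, of_apply]
  by_cases hij : i = j
  · subst hij
    rw [if_pos rfl, ← one_add_one_eq_two, Finsupp.single_add, hcoeff]
    by_cases h : p = i ∧ q = i <;> simp [h]
  · rw [if_neg hij, hcoeff]
    by_cases h₁ : p = i ∧ q = j <;> by_cases h₂ : p = j ∧ q = i
    · exact absurd (h₁.1.symm.trans h₂.1) hij
    all_goals simp [h₁, h₂, hij, Ne.symm hij]

theorem gramMatrix_linearForm_sq (a : Fin (n + 1) → ℝ) :
    gramMatrix n (linearForm a ^ 2) = vecMulVec a a := by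
  have hsq : linearForm a ^ 2 =
      ∑ p, ∑ q, (a p * a q) • (X p * X q : MvPolynomial (Fin (n + 1)) ℝ) := by
    rw [sq, linearForm_apply, sum_mul_sum]
    simp only [smul_mul_smul_comm]
  rw [← gramMatrixₗ_apply, hsq]
  ext i j
  simp only [map_sum, map_smul, gramMatrixₗ_apply, gramMatrix_X_mul_X, Matrix.sum_apply,
    Matrix.smul_apply, of_apply, vecMulVec_apply, smul_eq_mul, ite_and, add_div, mul_add,
    sum_add_distrib, ite_div, zero_div, mul_ite, mul_zero, sum_ite_irrel, sum_const_zero,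
    sum_ite_eq', mem_univ, if_true]
  ring

theorem gramMatrix_dirDeriv_sum_cubes {ι : Type*} [Fintype ι] (c : ι → ℝ)
    (a : ι → Fin (n + 1) → ℝ) (w : Fin (n + 1) → ℝ) :
    gramMatrix n (dirDeriv w (∑ k, C (c k) * linearForm (a k) ^ 3)) =
      ∑ k, (3 * c k * (w ⬝ᵥ a k)) • vecMulVec (a k) (a k) := by
  simp only [← smul_eq_C_mul, map_sum, Derivation.map_smul, dirDeriv_linearForm_pow_three,
    smul_smul]
  rw [← gramMatrixₗ_apply, map_sum]
  simp only [map_smul, gramMatrixₗ_apply, gramMatrix_linearForm_sq]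
  exact sum_congr rfl fun k _ => by ring_nf

end GramMatrix

theorem two_mul_add_one_le_card_of_le_rank_gramMatrix {n : ℕ} {F : MvPolynomial (Fin (n + 1)) ℝ}
    (hF : ∀ lam : Fin n → ℝ, n + 1 ≤ (gramMatrix n (dirDeriv (Fin.cons 1 lam) F)).rank)
    {ι : Type*} [Fintype ι] (c : ι → ℝ) (a : ι → Fin (n + 1) → ℝ)
    (hdec : F = ∑ k, C (c k) * linearForm (a k) ^ 3) :
    2 * n + 1 ≤ Fintype.card ι := by
  classical
  have hrank (w : Fin (n + 1) → ℝ) (hw : w 0 = 1) :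
      n + 1 ≤ (∑ k, (3 * c k * (w ⬝ᵥ a k)) • vecMulVec (a k) (a k)).rank := by
    have hcons : Fin.cons 1 (Fin.tail w) = w := hw ▸ Fin.cons_self_tail w
    simpa only [hdec, hcons, gramMatrix_dirDeriv_sum_cubes] using hF (Fin.tail w)
  have hspan : Submodule.span ℝ (Set.range a) = ⊤ := by
    refine Submodule.eq_top_of_finrank_eq (le_antisymm (Submodule.finrank_le _) ?_)
    simpa using (hrank (Pi.single 0 1) (by simp)).trans
      (rank_sum_smul_vecMulVec_self_le_finrank_span _ _)
  obtain ⟨φ, hφe, hφ⟩ := exists_dual_eq_one_vanishing_of_span_eq_top hspan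
    (e := Pi.single 0 1) (by simp)
  have hnonzero := (hrank (fun i => φ (Pi.single i 1)) hφe).trans
    (rank_sum_smul_vecMulVec_self_le_card _ _)
  have hsub : #{k | 3 * c k * ((fun i => φ (Pi.single i 1)) ⬝ᵥ a k) ≠ 0} ≤
      #{k | ¬φ (a k) = 0} := by
    refine card_le_card fun k hk => ?_
    simp_all [← dual_apply_eq_dotProduct]
  have hsplit := card_filter_add_card_filter_not (s := univ) fun k => φ (a k) = 0
  simp only [Module.finrank_fin_fun, card_univ] at hφ hsplit
  omega

section Cubic

variable {n : ℕ}

theorem dirDeriv_cubic (lam : Fin n → ℝ) :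
    dirDeriv (Fin.cons 1 lam) (X 0 * (X 0 ^ 2 - ∑ k : Fin n, X k.succ ^ 2)) =
      C (3 + ∑ k, lam k ^ 2) * X 0 ^ 2 - ∑ k, (X k.succ + C (lam k) * X 0) ^ 2 := by
  have hsq (k : Fin n) : (X k.succ + C (lam k) * X 0 : MvPolynomial (Fin (n + 1)) ℝ) ^ 2 =
      X k.succ ^ 2 + 2 * X 0 * (X k.succ * C (lam k)) + X 0 ^ 2 * C (lam k) ^ 2 := by
    ring
  simp only [Derivation.leibniz, map_sub, Derivation.leibniz_pow, Nat.add_one_sub_one, pow_one,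
    dirDeriv_X, Fin.cons_zero, C_1, smul_eq_mul, mul_one, nsmul_eq_mul, Nat.cast_ofNat, map_sum,
    Fin.cons_succ, C_add, C_pow, hsq, sum_add_distrib]
  simp only [← Finset.mul_sum, map_ofNat]
  ring

noncomputable def completedSquareVectors (lam : Fin n → ℝ) : Fin (n + 1) → Fin (n + 1) → ℝ :=
  Fin.cons (Pi.single 0 1) fun k => Pi.single k.succ 1 + lam k • Pi.single 0 1

theorem linearIndependent_completedSquareVectors (lam : Fin n → ℝ) :
    LinearIndependent ℝ (completedSquareVectors lam) := by
  set b := completedSquareVectors lam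
  refine linearIndependent_of_top_le_span_of_card_eq_finrank ?_ (by simp)
  rw [← (Pi.basisFun ℝ (Fin (n + 1))).span_eq, Submodule.span_le]
  rintro _ ⟨i, rfl⟩
  cases i using Fin.cases with
  | zero => exact Submodule.subset_span ⟨0, by simp [b, completedSquareVectors]⟩
  | succ k =>
    have hk : Pi.basisFun ℝ (Fin (n + 1)) k.succ = b k.succ - lam k • b 0 := by
      simp [b, completedSquareVectors]
    rw [hk]
    exact sub_mem (Submodule.subset_span ⟨_, rfl⟩)
      (Submodule.smul_mem _ _ (Submodule.subset_span ⟨_, rfl⟩))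

theorem rank_gramMatrix_dirDeriv_cubic (lam : Fin n → ℝ) :
    (gramMatrix n (dirDeriv (Fin.cons 1 lam)
      (X 0 * (X 0 ^ 2 - ∑ k : Fin n, X k.succ ^ 2)))).rank = n + 1 := by
  set μ : Fin (n + 1) → ℝ := Fin.cons (3 + ∑ k, lam k ^ 2) fun _ => -1
  have hμ (i : Fin (n + 1)) : μ i ≠ 0 := by
    cases i using Fin.cases with
    | zero => simp only [μ, Fin.cons_zero]; positivity
    | succ k => simp [μ]
  have hsquares : C (3 + ∑ k, lam k ^ 2) * X 0 ^ 2 - ∑ k, (X k.succ + C (lam k) * X 0) ^ 2 =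
      ∑ i, μ i • linearForm (completedSquareVectors lam i) ^ 2 := by
    simp [Fin.sum_univ_succ, μ, completedSquareVectors, linearForm_single, smul_eq_C_mul,
      sub_eq_add_neg]
  rw [dirDeriv_cubic, hsquares, ← gramMatrixₗ_apply, map_sum]
  simp only [map_smul, gramMatrixₗ_apply, gramMatrix_linearForm_sq]
  rw [rank_sum_smul_vecMulVec_self_of_linearIndependent hμ
    (linearIndependent_completedSquareVectors lam), Fintype.card_fin]

-- Each pair `-(1/6) ((x₀ + xₖ)³ + (x₀ - xₖ)³)` equals `-x₀³/3 - x₀xₖ²`; the coefficient of `x₀³`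
-- compensates the `n` surplus terms `-x₀³/3`.
noncomputable def cubeCoeff : Option (Bool × Fin n) → ℝ
  | none => 1 + n / 3
  | some _ => -1 / 6

noncomputable def cubeForm : Option (Bool × Fin n) → MvPolynomial (Fin (n + 1)) ℝ
  | none => X 0
  | some (true, k) => X 0 + X k.succ
  | some (false, k) => X 0 - X k.succ

theorem isLinearForm_cubeForm (k : Option (Bool × Fin n)) : IsLinearForm (cubeForm k) := by
  have hX (i : Fin (n + 1)) : X i ∈ LinearMap.range linearForm :=
    ⟨Pi.single i (1 : ℝ), linearForm_single i⟩
  rw [isLinearForm_iff_mem_range]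
  rcases k with _ | ⟨_ | _, k⟩
  exacts [hX 0, sub_mem (hX 0) (hX _), add_mem (hX 0) (hX _)]

theorem cubic_eq_sum_cubes :
    X 0 * (X 0 ^ 2 - ∑ k : Fin n, X k.succ ^ 2) = ∑ k, C (cubeCoeff k) * cubeForm k ^ 3 := by
  have h₆ : C (-1 / 6 : ℝ) * 6 = (-1 : MvPolynomial (Fin (n + 1)) ℝ) := by
    rw [← map_ofNat C 6, ← map_mul]
    norm_num
  have h₃ : C (1 + n / 3 : ℝ) + (n : MvPolynomial (Fin (n + 1)) ℝ) * (2 * C (-1 / 6 : ℝ)) = 1 := by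
    rw [← map_natCast C, ← map_ofNat C 2, ← map_mul, ← map_mul, ← map_add, ← map_one C]
    congr 1
    ring
  have hpair (k : Fin n) :
      C (-1 / 6 : ℝ) * (X 0 + X k.succ) ^ 3 + C (-1 / 6) * (X 0 - X k.succ) ^ 3 =
        2 * C (-1 / 6 : ℝ) * X 0 ^ 3 - X 0 * X k.succ ^ 2 := by
    linear_combination (X 0 * X k.succ ^ 2) * h₆
  rw [Fintype.sum_option, Fintype.sum_prod_type_right]
  simp only [Fintype.sum_bool, cubeCoeff, cubeForm]
  simp only [hpair, sum_sub_distrib, sum_const, card_univ, Fintype.card_fin, nsmul_eq_mul,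
    ← Finset.mul_sum]
  linear_combination (-X 0 ^ 3) * h₃

end Cubic

theorem stmt_17_general (n : ℕ)
    (F : MvPolynomial (Fin (n + 1)) ℝ)
    (hF : F = X 0 * (X 0 ^ 2 - ∑ i : Fin (n + 1), if i = 0 then 0 else X i ^ 2)) :
    (∀ lam : Fin n → ℝ,
      (gramMatrix n (pderiv 0 F + ∑ k : Fin n, C (lam k) * pderiv k.succ F)).rank = n + 1) ∧
    (∀ (s : ℕ) (c : Fin s → ℝ) (L : Fin s → MvPolynomial (Fin (n + 1)) ℝ),
      (∀ k, IsLinearForm (L k)) → F = ∑ k, C (c k) * L k ^ 3 → 2 * n + 1 ≤ s) ∧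
    (∃ (c : Fin (2 * n + 1) → ℝ) (L : Fin (2 * n + 1) → MvPolynomial (Fin (n + 1)) ℝ),
      (∀ k, IsLinearForm (L k)) ∧ F = ∑ k, C (c k) * L k ^ 3) := by
  replace hF : F = X 0 * (X 0 ^ 2 - ∑ k : Fin n, X k.succ ^ 2) := by
    simp [hF, Fin.sum_univ_succ]
  have hrank (lam : Fin n → ℝ) :
      (gramMatrix n (pderiv 0 F + ∑ k : Fin n, C (lam k) * pderiv k.succ F)).rank = n + 1 := by
    rw [pderiv_zero_add_sum_eq_dirDeriv, hF, rank_gramMatrix_dirDeriv_cubic]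
  refine ⟨hrank, fun s c L hL hdec => ?_, ?_⟩
  · choose a ha using fun k => isLinearForm_iff_mem_range.1 (hL k)
    simpa using two_mul_add_one_le_card_of_le_rank_gramMatrix
      (fun lam => by rw [← pderiv_zero_add_sum_eq_dirDeriv, hrank]) c a (by simp only [hdec, ha])
  · let e : Option (Bool × Fin n) ≃ Fin (2 * n + 1) := Fintype.equivFinOfCardEq (by simp)
    refine ⟨cubeCoeff ∘ e.symm, cubeForm ∘ e.symm, fun k => isLinearForm_cubeForm _, ?_⟩
    rw [hF, cubic_eq_sum_cubes, ← e.symm.sum_comp]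
    rfl

theorem stmt_17 (n : ℕ) (hn : 1 ≤ n)
    (F : MvPolynomial (Fin (n + 1)) ℝ)
    (hF : F = X 0 * (X 0 ^ 2 - ∑ i : Fin (n + 1), if i = 0 then 0 else X i ^ 2)) :
    (∀ lam : Fin n → ℝ,
      (gramMatrix n (pderiv 0 F + ∑ k : Fin n, C (lam k) * pderiv k.succ F)).rank = n + 1) ∧
    (∀ (s : ℕ) (c : Fin s → ℝ) (L : Fin s → MvPolynomial (Fin (n + 1)) ℝ),
      (∀ k, IsLinearForm (L k)) → F = ∑ k, C (c k) * L k ^ 3 → 2 * n + 1 ≤ s) ∧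
    (∃ (c : Fin (2 * n + 1) → ℝ) (L : Fin (2 * n + 1) → MvPolynomial (Fin (n + 1)) ℝ),
      (∀ k, IsLinearForm (L k)) ∧ F = ∑ k, C (c k) * L k ^ 3) :=
  stmt_17_general n F hF
end

section
/- Let F = (α x₀ + x_p)(x₀² + … + x_{p−1}² − x_p² − … − xₙ²) ∈ ℝ[x₀,…,xₙ] with α ≠ 0 and 2 ≤ p ≤ n. Then rk_ℝ(F) ≤ 2n+3, i.e., F can be written as a sum of at most 2n+3 terms ±L³ with real linear forms L. -/
open MvPolynomial

namespace Stmt19Aux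

variable {n : ℕ}

lemma lin_X (i : Fin (n + 1)) : IsLinearForm (X i : MvPolynomial (Fin (n + 1)) ℝ) := by
  refine ⟨fun j => if j = i then 1 else 0, ?_⟩
  rw [Finset.sum_eq_single i]
  · simp
  · intro b _ hb; simp [hb]
  · simp

lemma lin_add {L M : MvPolynomial (Fin (n + 1)) ℝ} (hL : IsLinearForm L)
    (hM : IsLinearForm M) : IsLinearForm (L + M) := by
  obtain ⟨a, rfl⟩ := hL; obtain ⟨b, rfl⟩ := hM
  refine ⟨a + b, ?_⟩
  rw [← Finset.sum_add_distrib]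
  refine Finset.sum_congr rfl fun i _ => ?_
  simp [add_mul]

lemma lin_smul (t : ℝ) {L : MvPolynomial (Fin (n + 1)) ℝ} (hL : IsLinearForm L) :
    IsLinearForm (C t * L) := by
  obtain ⟨a, rfl⟩ := hL
  refine ⟨fun i => t * a i, ?_⟩
  rw [Finset.mul_sum]
  refine Finset.sum_congr rfl fun i _ => ?_
  rw [map_mul, mul_assoc]

lemma lin_sub {L M : MvPolynomial (Fin (n + 1)) ℝ} (hL : IsLinearForm L)
    (hM : IsLinearForm M) : IsLinearForm (L - M) := by
  have h := lin_smul (-1) hM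
  have : L - M = L + C (-1) * M := by rw [map_neg, map_one]; ring
  rw [this]; exact lin_add hL h

lemma cube_root (x : ℝ) : ∃ c t : ℝ, (c = 1 ∨ c = -1) ∧ x = c * t ^ 3 := by
  rcases le_total 0 x with h | h
  · refine ⟨1, x ^ ((1 : ℝ)/3), Or.inl rfl, ?_⟩
    rw [one_mul, ← Real.rpow_natCast (x ^ ((1 : ℝ)/3)) 3, ← Real.rpow_mul h]
    norm_num
  · refine ⟨-1, (-x) ^ ((1 : ℝ)/3), Or.inr rfl, ?_⟩
    have h' : (0 : ℝ) ≤ -x := by linarith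
    rw [neg_one_mul, ← Real.rpow_natCast ((-x) ^ ((1 : ℝ)/3)) 3, ← Real.rpow_mul h']
    norm_num

lemma normalize (lam : ℝ) {L : MvPolynomial (Fin (n + 1)) ℝ} (hL : IsLinearForm L) :
    ∃ (c : ℝ) (L' : MvPolynomial (Fin (n + 1)) ℝ),
      (c = 1 ∨ c = -1) ∧ IsLinearForm L' ∧ C lam * L ^ 3 = C c * L' ^ 3 := by
  obtain ⟨c, t, hc, rfl⟩ := cube_root lam
  refine ⟨c, C t * L, hc, lin_smul t hL, ?_⟩
  rw [map_mul, map_pow, mul_pow]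
  ring

lemma key (e : ℝ) (x l : MvPolynomial (Fin (n + 1)) ℝ) :
    C (e/6) * (x + l) ^ 3 + (C (-(e/6)) * (x - l) ^ 3 + C (-(e/3)) * l ^ 3)
      = l * (C e * x ^ 2) := by
  have h2 : C (-(e/3)) = -(2 * C (e/6) : MvPolynomial (Fin (n + 1)) ℝ) := by
    rw [show -(e/3) = -(2 * (e/6)) by ring, map_neg, map_mul]
    norm_num [map_ofNat]
  have h3 : C e = (6 : MvPolynomial (Fin (n + 1)) ℝ) * C (e/6) := by
    rw [show e = 6 * (e/6) by ring, map_mul]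
    norm_num [map_ofNat]
  rw [map_neg, h2, h3]
  ring

end Stmt19Aux

open Stmt19Aux in
theorem stmt_19 (n : ℕ) (hn : 2 ≤ n) (α : ℝ) (hα : α ≠ 0)
    (p : Fin (n + 1)) (hp : 2 ≤ (p : ℕ))
    (F : MvPolynomial (Fin (n + 1)) ℝ)
    (hF : F = (C α * X 0 + X p) *
      ∑ i : Fin (n + 1), C (if (i : ℕ) < (p : ℕ) then (1 : ℝ) else -1) * X i ^ 2) :
    ∃ s : ℕ, s ≤ 2 * n + 3 ∧
      ∃ (c : Fin s → ℝ) (L : Fin s → MvPolynomial (Fin (n + 1)) ℝ),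
        (∀ k, c k = 1 ∨ c k = -1) ∧ (∀ k, IsLinearForm (L k)) ∧
        F = ∑ k, C (c k) * L k ^ 3 := by
  set l : MvPolynomial (Fin (n + 1)) ℝ := C α * X 0 + X p with hl
  set ε : Fin (n + 1) → ℝ := fun i => if (i : ℕ) < (p : ℕ) then (1 : ℝ) else -1 with hε
  have hlinl : IsLinearForm l := lin_add (lin_smul α (lin_X 0)) (lin_X p)
  -- index type
  let ι := Sum (Fin (n + 1)) (Sum (Fin (n + 1)) Unit)
  let c₀ : ι → ℝ := Sum.elim (fun i => ε i / 6)
    (Sum.elim (fun i => -(ε i / 6)) (fun _ => ∑ i, -(ε i / 3)))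
  let L₀ : ι → MvPolynomial (Fin (n + 1)) ℝ := Sum.elim (fun i => X i + l)
    (Sum.elim (fun i => X i - l) (fun _ => l))
  have hlin0 : ∀ x : ι, IsLinearForm (L₀ x) := by
    rintro (i | i | _)
    · exact lin_add (lin_X i) hlinl
    · exact lin_sub (lin_X i) hlinl
    · exact hlinl
  have hFsum : F = ∑ x : ι, C (c₀ x) * L₀ x ^ 3 := by
    rw [Fintype.sum_sum_type, Fintype.sum_sum_type]
    simp only [ι, c₀, L₀, Sum.elim_inl, Sum.elim_inr]
    rw [Finset.sum_const, Finset.card_univ, Fintype.card_unit, one_smul]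
    rw [map_sum, Finset.sum_mul, ← Finset.sum_add_distrib, ← Finset.sum_add_distrib]
    rw [hF, Finset.mul_sum]
    exact Finset.sum_congr rfl fun i _ => (key (ε i) (X i) l).symm
  have hnorm : ∀ x : ι, ∃ (c' : ℝ) (L' : MvPolynomial (Fin (n + 1)) ℝ),
      (c' = 1 ∨ c' = -1) ∧ IsLinearForm L' ∧ C (c₀ x) * L₀ x ^ 3 = C c' * L' ^ 3 :=
    fun x => normalize (c₀ x) (hlin0 x)
  choose c' L' hc' hlin' heq using hnorm
  have hcard : Fintype.card ι = 2 * n + 3 := by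
    simp [ι]; omega
  let e := Fintype.equivFinOfCardEq hcard
  refine ⟨2 * n + 3, le_refl _, c' ∘ e.symm, L' ∘ e.symm,
    fun k => hc' _, fun k => hlin' _, ?_⟩
  have := Equiv.sum_comp e.symm (fun x => C (c' x) * L' x ^ 3)
  simp only [Function.comp]
  rw [hFsum]
  calc (∑ x : ι, C (c₀ x) * L₀ x ^ 3) = ∑ x : ι, C (c' x) * L' x ^ 3 :=
        Finset.sum_congr rfl fun x _ => heq x
    _ = _ := this.symm
end
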